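/- arXiv:1402.5884 — 6 statements merged into one kernel-verified Lean document; each statement's English description precedes it below -/
import Mathlib

section
/- Along Algorithm A1, for every k one has f(x^{k+1}) ≤ f(x^k) − δ(α_k/β_k)‖x^k − P_C(z^k)‖²; in particular the sequence (f(x^k))_{k∈ℕ} is nonincreasing. -/
/-!
The projection inequality at `z = x - β ∇f(x)` against the feasible point `x` gives
`‖x - P_C z‖² ≤ β ⟨∇f(x), x - P_C z⟩`, so the Armijo decrease `δ α ⟨∇f(x), x - P_C z⟩` is at least
`δ (α/β) ‖x - P_C z‖²`. Feasibility of every iterate holds because each step is a convex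
combination of two points of `C`.
-/

open Filter
open scoped RealInnerProductSpace

theorem Convex.seq_mem_of_succ_eq_combination {E : Type*} [AddCommGroup E] [Module ℝ E]
    {C : Set E} (hC : Convex ℝ C) {x p : ℕ → E} {a : ℕ → ℝ} (hx0 : x 0 ∈ C)
    (hp : ∀ k, p k ∈ C) (ha : ∀ k, a k ∈ Set.Icc (0 : ℝ) 1)
    (hstep : ∀ k, x (k + 1) = a k • p k + (1 - a k) • x k) (k : ℕ) : x k ∈ C := by
  induction k with
  | zero => exact hx0
  | succ k ih =>
    rw [hstep k]
    exact hC (hp k) ih (ha k).1 (sub_nonneg.2 (ha k).2) (add_sub_cancel _ _)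

section InnerProductSpace

variable {H : Type*} [NormedAddCommGroup H] [InnerProductSpace ℝ H]

theorem norm_sub_sq_le_mul_inner_of_inner_sub_smul_le_zero {x g p : H} {β : ℝ}
    (h : ⟪(x - β • g) - p, x - p⟫ ≤ 0) : ‖x - p‖ ^ 2 ≤ β * ⟪g, x - p⟫ := by
  rw [sub_right_comm, inner_sub_left, inner_smul_left, real_inner_self_eq_norm_sq] at h
  simpa using h

theorem le_sub_mul_norm_sq_of_armijo {f : H → ℝ} {x p g : H} {a β δ : ℝ}
    (hδ : 0 ≤ δ) (ha : 0 ≤ a) (hβ : 0 < β) (hp : ‖x - p‖ ^ 2 ≤ β * ⟪g, x - p⟫)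
    (harmijo : f (a • p + (1 - a) • x) ≤ f x - δ * a * ⟪g, x - p⟫) :
    f (a • p + (1 - a) • x) ≤ f x - δ * (a / β) * ‖x - p‖ ^ 2 := by
  have hnorm : ‖x - p‖ ^ 2 / β ≤ ⟪g, x - p⟫ := by rwa [div_le_iff₀' hβ]
  calc f (a • p + (1 - a) • x) ≤ f x - δ * a * ⟪g, x - p⟫ := harmijo
    _ ≤ f x - δ * a * (‖x - p‖ ^ 2 / β) := by gcongr
    _ = f x - δ * (a / β) * ‖x - p‖ ^ 2 := by ring

end InnerProductSpace

theorem stmt_1_general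
    {H : Type*} [NormedAddCommGroup H] [InnerProductSpace ℝ H]
    (C : Set H) (hCcv : Convex ℝ C)
    (f : H → ℝ)
    (gradf : H → H)
    (PC : H → H)
    (hPC : ∀ x : H, PC x ∈ C ∧ ∀ z ∈ C, ⟪x - PC x, z - PC x⟫ ≤ 0)
    (θ δ βlo βhi : ℝ)
    (hθ : θ ∈ Set.Ioo (0:ℝ) 1) (hδ : δ ∈ Set.Ioo (0:ℝ) 1)
    (hβlo : 0 < βlo)
    (β : ℕ → ℝ) (hβk : ∀ k, β k ∈ Set.Icc βlo βhi)
    (x z : ℕ → H) (α : ℕ → ℝ) (j : ℕ → ℕ)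
    (hx0 : x 0 ∈ C)
    (hz : ∀ k, z k = x k - β k • gradf (x k))
    (hjA : ∀ k, f ((θ ^ j k) • PC (z k) + (1 - θ ^ j k) • x k)
        ≤ f (x k) - δ * θ ^ j k * ⟪gradf (x k), x k - PC (z k)⟫)
    (hα : ∀ k, α k = θ ^ j k)
    (hstep : ∀ k, x (k+1) = α k • PC (z k) + (1 - α k) • x k)
    : (∀ k, f (x (k+1)) ≤ f (x k) - δ * (α k / β k) * ‖x k - PC (z k)‖ ^ 2) ∧
      Antitone (fun k => f (x k)) := by
  have hα_mem (k : ℕ) : α k ∈ Set.Icc (0 : ℝ) 1 :=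
    hα k ▸ ⟨pow_nonneg hθ.1.le _, pow_le_one₀ hθ.1.le hθ.2.le⟩
  have hβ (k : ℕ) : 0 < β k := hβlo.trans_le (hβk k).1
  have hxC := hCcv.seq_mem_of_succ_eq_combination hx0 (fun k => (hPC (z k)).1) hα_mem hstep
  have hdescent (k : ℕ) :
      f (x (k+1)) ≤ f (x k) - δ * (α k / β k) * ‖x k - PC (z k)‖ ^ 2 := by
    have hproj := (hPC (z k)).2 (x k) (hxC k)
    nth_rw 1 [hz k] at hproj
    rw [hstep k]
    exact le_sub_mul_norm_sq_of_armijo hδ.1.le (hα_mem k).1 (hβ k)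
      (norm_sub_sq_le_mul_inner_of_inner_sub_smul_le_zero hproj) (hα k ▸ hjA k)
  refine ⟨hdescent, antitone_nat_of_succ_le fun k => (hdescent k).trans (sub_le_self _ ?_)⟩
  exact mul_nonneg (mul_nonneg hδ.1.le (div_nonneg (hα_mem k).1 (hβ k).le)) (sq_nonneg _)

theorem stmt_1
    {H : Type*} [NormedAddCommGroup H] [InnerProductSpace ℝ H] [CompleteSpace H]
    (C : Set H) (hCne : C.Nonempty) (hCcl : IsClosed C) (hCcv : Convex ℝ C)
    (f : H → ℝ) (hf : ConvexOn ℝ Set.univ f)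
    (gradf : H → H)
    (hgrad : ∀ x d : H,
      Tendsto (fun t : ℝ => (f (x + t • d) - f x) / t) (nhdsWithin 0 (Set.Ioi 0))
        (nhds ⟪gradf x, d⟫))
    (PC : H → H)
    (hPC : ∀ x : H, PC x ∈ C ∧ ∀ z ∈ C, ⟪x - PC x, z - PC x⟫ ≤ 0)
    (θ δ βlo βhi : ℝ)
    (hθ : θ ∈ Set.Ioo (0:ℝ) 1) (hδ : δ ∈ Set.Ioo (0:ℝ) 1)
    (hβlo : 0 < βlo) (hββ : βlo ≤ βhi)
    (β : ℕ → ℝ) (hβk : ∀ k, β k ∈ Set.Icc βlo βhi)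
    (x z : ℕ → H) (α : ℕ → ℝ) (j : ℕ → ℕ)
    (hx0 : x 0 ∈ C)
    (hz : ∀ k, z k = x k - β k • gradf (x k))
    (hjA : ∀ k, f ((θ ^ j k) • PC (z k) + (1 - θ ^ j k) • x k)
        ≤ f (x k) - δ * θ ^ j k * ⟪gradf (x k), x k - PC (z k)⟫)
    (hjmin : ∀ k, ∀ i < j k, ¬ (f ((θ ^ i) • PC (z k) + (1 - θ ^ i) • x k)
        ≤ f (x k) - δ * θ ^ i * ⟪gradf (x k), x k - PC (z k)⟫))
    (hα : ∀ k, α k = θ ^ j k)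
    (hstep : ∀ k, x (k+1) = α k • PC (z k) + (1 - α k) • x k)
    : (∀ k, f (x (k+1)) ≤ f (x k) - δ * (α k / β k) * ‖x k - PC (z k)‖ ^ 2) ∧
      Antitone (fun k => f (x k)) :=
  stmt_1_general C hCcv f gradf PC hPC θ δ βlo βhi hθ hδ hβlo β hβk x z α j hx0 hz hjA hα hstep
end

section
/- (Well-definedness of the Armijo inner loop.) Let x ∈ C, β > 0, θ, δ ∈ (0,1), and set w = P_C(x − β∇f(x)). If x is not a minimizer of f over C (equivalently, x ≠ w), then there exists j ∈ ℕ such that f(θ^j w + (1 − θ^j) x) ≤ f(x) − δ θ^j ⟨∇f(x), x − w⟩. -/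
/-!
If `w = P_C(x - β∇f(x))` equals `x`, the projection inequality says `⟨∇f(x), y - x⟩ ≥ 0` on `C`,
which by the convex gradient inequality makes `x` a minimizer. Otherwise, testing the projection
inequality at `z = x` gives `‖x - w‖² ≤ β ⟨∇f(x), x - w⟩`, so `w - x` is a descent direction, and
since `δ < 1` the Armijo condition holds along `θ^j → 0⁺`.
-/

open Filter Set Topology
open scoped RealInnerProductSpace

theorem ConvexOn.le_sub_of_tendsto_slope {E : Type*} [AddCommGroup E] [Module ℝ E]
    {f : E → ℝ} (hf : ConvexOn ℝ univ f) {x d : E} {L : ℝ}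
    (hL : Tendsto (fun t : ℝ => (f (x + t • d) - f x) / t) (𝓝[>] 0) (𝓝 L)) :
    L ≤ f (x + d) - f x := by
  refine le_of_tendsto hL ?_
  have hIoc : Ioc (0 : ℝ) 1 ∈ 𝓝[>] (0 : ℝ) :=
    mem_nhdsGT_iff_exists_Ioc_subset.mpr ⟨1, mem_Ioi.mpr one_pos, subset_rfl⟩
  filter_upwards [hIoc] with t ⟨ht0, ht1⟩
  have hseg : x + t • d = (1 - t) • x + t • (x + d) := by module
  have hconv : f ((1 - t) • x + t • (x + d)) ≤ (1 - t) * f x + t * f (x + d) :=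
    hf.2 (mem_univ _) (mem_univ _) (by linarith) ht0.le (by ring)
  rw [hseg, div_le_iff₀ ht0]
  linarith

theorem exists_pow_le_add_mul_of_tendsto_slope {E : Type*} [AddCommGroup E] [Module ℝ E]
    {f : E → ℝ} {x d : E} {L θ δ : ℝ}
    (hL : Tendsto (fun t : ℝ => (f (x + t • d) - f x) / t) (𝓝[>] 0) (𝓝 L))
    (hL0 : L < 0) (hθ : θ ∈ Ioo (0 : ℝ) 1) (hδ : δ < 1) :
    ∃ j : ℕ, f (x + θ ^ j • d) ≤ f x + δ * θ ^ j * L := by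
  have hslope : ∀ᶠ t in 𝓝[>] (0 : ℝ), (f (x + t • d) - f x) / t < δ * L :=
    hL.eventually (eventually_lt_nhds (by nlinarith))
  have hpow : Tendsto (fun n : ℕ => θ ^ n) atTop (𝓝[>] 0) :=
    tendsto_nhdsWithin_of_tendsto_nhds_of_eventually_within _
      (tendsto_pow_atTop_nhds_zero_of_lt_one hθ.1.le hθ.2)
      (Eventually.of_forall fun n => pow_pos hθ.1 n)
  obtain ⟨j, hj⟩ := (hpow.eventually hslope).exists
  refine ⟨j, ?_⟩
  rw [div_lt_iff₀ (pow_pos hθ.1 j)] at hj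
  linarith

section Projection

variable {H : Type*} [NormedAddCommGroup H] [InnerProductSpace ℝ H] {C : Set H} {x g w : H} {b : ℝ}

theorem inner_nonneg_of_proj_eq_self (hb : 0 < b)
    (hproj : ∀ z ∈ C, ⟪x - b • g - x, z - x⟫ ≤ 0) (z : H) (hz : z ∈ C) :
    0 ≤ ⟪g, z - x⟫ := by
  have h := hproj z hz
  rw [sub_sub_cancel_left, inner_neg_left, real_inner_smul_left] at h
  nlinarith

theorem inner_sub_proj_pos (hb : 0 < b) (hx : x ∈ C)
    (hproj : ∀ z ∈ C, ⟪x - b • g - w, z - w⟫ ≤ 0) (hxw : w ≠ x) :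
    0 < ⟪g, x - w⟫ := by
  have hsq : ‖x - w‖ ^ 2 ≤ b * ⟪g, x - w⟫ := by
    have h := hproj x hx
    rw [sub_right_comm, inner_sub_left, real_inner_smul_left, real_inner_self_eq_norm_sq] at h
    linarith
  have hpos : 0 < ‖x - w‖ ^ 2 := by
    have := norm_pos_iff.mpr (sub_ne_zero.mpr hxw.symm)
    positivity
  nlinarith

end Projection

theorem stmt_3_general
    {H : Type*} [NormedAddCommGroup H] [InnerProductSpace ℝ H]
    (C : Set H)
    (f : H → ℝ) (hf : ConvexOn ℝ Set.univ f)
    (gradf : H → H)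
    (hgrad : ∀ x d : H,
      Tendsto (fun t : ℝ => (f (x + t • d) - f x) / t) (nhdsWithin 0 (Set.Ioi 0))
        (nhds ⟪gradf x, d⟫))
    (PC : H → H)
    (hPC : ∀ x : H, PC x ∈ C ∧ ∀ z ∈ C, ⟪x - PC x, z - PC x⟫ ≤ 0)
    (x₀ : H) (hx₀ : x₀ ∈ C) (b θ δ : ℝ) (hb : 0 < b)
    (hθ : θ ∈ Set.Ioo (0:ℝ) 1) (hδ : δ ∈ Set.Ioo (0:ℝ) 1)
    (hxnot : ¬ ∀ y ∈ C, f x₀ ≤ f y)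
    : ∃ j : ℕ, f ((θ ^ j) • PC (x₀ - b • gradf x₀) + (1 - θ ^ j) • x₀)
      ≤ f x₀ - δ * θ ^ j * ⟪gradf x₀, x₀ - PC (x₀ - b • gradf x₀)⟫ := by
  set w := PC (x₀ - b • gradf x₀)
  have hproj : ∀ z ∈ C, ⟪x₀ - b • gradf x₀ - w, z - w⟫ ≤ 0 := (hPC _).2
  have hwx : w ≠ x₀ := by
    intro hfix
    refine hxnot fun y hy => ?_
    rw [hfix] at hproj
    have hstat := inner_nonneg_of_proj_eq_self hb hproj y hy
    have hgradineq := hf.le_sub_of_tendsto_slope (hgrad x₀ (y - x₀))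
    rw [add_sub_cancel] at hgradineq
    linarith
  have hdescent : ⟪gradf x₀, w - x₀⟫ < 0 := by
    rw [← neg_sub, inner_neg_right, neg_neg_iff_pos]
    exact inner_sub_proj_pos hb hx₀ hproj hwx
  obtain ⟨j, hj⟩ := exists_pow_le_add_mul_of_tendsto_slope (hgrad x₀ (w - x₀)) hdescent hθ hδ.2
  refine ⟨j, ?_⟩
  have hseg : x₀ + θ ^ j • (w - x₀) = θ ^ j • w + (1 - θ ^ j) • x₀ := by module
  rw [hseg, ← neg_sub x₀ w, inner_neg_right] at hj
  linarith

theorem stmt_3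
    {H : Type*} [NormedAddCommGroup H] [InnerProductSpace ℝ H] [CompleteSpace H]
    (C : Set H) (hCne : C.Nonempty) (hCcl : IsClosed C) (hCcv : Convex ℝ C)
    (f : H → ℝ) (hf : ConvexOn ℝ Set.univ f)
    (gradf : H → H)
    (hgrad : ∀ x d : H,
      Tendsto (fun t : ℝ => (f (x + t • d) - f x) / t) (nhdsWithin 0 (Set.Ioi 0))
        (nhds ⟪gradf x, d⟫))
    (PC : H → H)
    (hPC : ∀ x : H, PC x ∈ C ∧ ∀ z ∈ C, ⟪x - PC x, z - PC x⟫ ≤ 0)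
    (x₀ : H) (hx₀ : x₀ ∈ C) (b θ δ : ℝ) (hb : 0 < b)
    (hθ : θ ∈ Set.Ioo (0:ℝ) 1) (hδ : δ ∈ Set.Ioo (0:ℝ) 1)
    (hxnot : ¬ ∀ y ∈ C, f x₀ ≤ f y)
    : ∃ j : ℕ, f ((θ ^ j) • PC (x₀ - b • gradf x₀) + (1 - θ ^ j) • x₀)
      ≤ f x₀ - δ * θ ^ j * ⟪gradf x₀, x₀ - PC (x₀ - b • gradf x₀)⟫ :=
  stmt_3_general C f hf gradf hgrad PC hPC x₀ hx₀ b θ δ hb hθ hδ hxnot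
end

section
/- Assume S_* ≠ ∅. Then the sequence (x^k)_{k∈ℕ} generated by Algorithm A1 is quasi-Fejér convergent to S_*: there exists a nonnegative sequence (ε_k)_{k∈ℕ} with Σ_{k=0}^∞ ε_k < ∞ such that ‖x^{k+1} − x_*‖² ≤ ‖x^k − x_*‖² + ε_k for every x_* ∈ S_* and every k. -/
/-!
Write `p = P_C(z)` and `d = x - p` for one step of the algorithm. The projection inequality,
tested at `x` and at a minimizer `x*`, gives `‖d‖² ≤ β⟨∇f(x), d⟩` and
`⟨d, x* - x⟩ ≤ β⟨∇f(x), d⟩ - ‖d‖²` (the latter using `⟨∇f(x), x* - x⟩ ≤ f(x*) - f(x) ≤ 0`).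
Expanding `‖x - αd - x*‖²` then bounds the increase of the squared distance to `x*` by
`2αβ̂⟨∇f(x), d⟩`, which the Armijo condition bounds by `(2β̂/δ)(f(xᵏ) - f(xᵏ⁺¹))`. These errors
telescope, and their sum is at most `(2β̂/δ)(f(x⁰) - min f)`.
-/

open Filter
open scoped RealInnerProductSpace

theorem ConvexOn.inner_le_sub_of_tendsto_slope {H : Type*} [NormedAddCommGroup H]
    [InnerProductSpace ℝ H] {f : H → ℝ} (hf : ConvexOn ℝ Set.univ f) {g a b : H}
    (hg : Tendsto (fun t : ℝ => (f (a + t • (b - a)) - f a) / t) (nhdsWithin 0 (Set.Ioi 0))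
      (nhds ⟪g, b - a⟫)) :
    ⟪g, b - a⟫ ≤ f b - f a := by
  refine le_of_tendsto hg ?_
  filter_upwards [Ioo_mem_nhdsGT (zero_lt_one' ℝ)] with t ⟨ht0, ht1⟩
  have hconv : f (t • b + (1 - t) • a) ≤ t * f b + (1 - t) * f a :=
    hf.2 (Set.mem_univ b) (Set.mem_univ a) ht0.le (by linarith) (by ring)
  rw [show a + t • (b - a) = t • b + (1 - t) • a by module, div_le_iff₀ ht0]
  linarith

theorem Antitone.summable_sub_succ {u : ℕ → ℝ} (hu : Antitone u) (hbdd : BddBelow (Set.range u)) :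
    Summable fun k => u k - u (k + 1) := by
  obtain ⟨m, hm⟩ := hbdd
  refine summable_of_sum_range_le (c := u 0 - m) (fun k => sub_nonneg.2 (hu k.le_succ)) fun n => ?_
  rw [Finset.sum_range_sub' u]
  linarith [hm ⟨n, rfl⟩]

theorem Convex.mem_of_step_mem {E : Type*} [AddCommGroup E] [Module ℝ E] {C : Set E}
    (hC : Convex ℝ C) {x p : ℕ → E} {α : ℕ → ℝ} (hx0 : x 0 ∈ C) (hp : ∀ k, p k ∈ C)
    (hα0 : ∀ k, 0 ≤ α k) (hα1 : ∀ k, α k ≤ 1)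
    (hstep : ∀ k, x (k + 1) = α k • p k + (1 - α k) • x k) (k : ℕ) : x k ∈ C := by
  induction k with
  | zero => exact hx0
  | succ k ih => exact hstep k ▸ hC (hp k) ih (hα0 k) (sub_nonneg.2 (hα1 k)) (add_sub_cancel _ _)

section ProjectedGradientStep

variable {H : Type*} [NormedAddCommGroup H] [InnerProductSpace ℝ H] {C : Set H} {x g p : H}
  {β : ℝ}

theorem inner_sub_le_of_proj (hp : ∀ w ∈ C, ⟪x - β • g - p, w - p⟫ ≤ 0) {w : H}
    (hw : w ∈ C) : ⟪x - p, w - p⟫ ≤ β * ⟪g, w - p⟫ := by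
  have := hp w hw
  rw [sub_right_comm, inner_sub_left, real_inner_smul_left] at this
  linarith

theorem norm_sub_sq_le_of_proj (hp : ∀ w ∈ C, ⟪x - β • g - p, w - p⟫ ≤ 0)
    (hx : x ∈ C) : ‖x - p‖ ^ 2 ≤ β * ⟪g, x - p⟫ := by
  simpa only [real_inner_self_eq_norm_sq] using inner_sub_le_of_proj hp hx

theorem inner_sub_nonneg_of_proj (hp : ∀ w ∈ C, ⟪x - β • g - p, w - p⟫ ≤ 0)
    (hx : x ∈ C) (hβ : 0 < β) : 0 ≤ ⟪g, x - p⟫ :=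
  nonneg_of_mul_nonneg_right ((sq_nonneg _).trans (norm_sub_sq_le_of_proj hp hx)) hβ

theorem norm_step_sub_sq_le_of_proj (hp : ∀ w ∈ C, ⟪x - β • g - p, w - p⟫ ≤ 0)
    (hx : x ∈ C) {y : H} (hy : y ∈ C) (hgy : ⟪g, y - x⟫ ≤ 0) (hβ : 0 ≤ β) {α : ℝ}
    (hα0 : 0 ≤ α) (hα1 : α ≤ 1) :
    ‖α • p + (1 - α) • x - y‖ ^ 2 ≤ ‖x - y‖ ^ 2 + 2 * β * (α * ⟪g, x - p⟫) := by
  have hN := norm_sub_sq_le_of_proj hp hx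
  have hy' := inner_sub_le_of_proj hp hy
  rw [show y - p = (y - x) + (x - p) by abel, inner_add_right, inner_add_right,
    real_inner_self_eq_norm_sq] at hy'
  have hA : ⟪x - p, y - x⟫ ≤ β * ⟪g, x - p⟫ - ‖x - p‖ ^ 2 := by
    linarith [mul_nonpos_of_nonneg_of_nonpos hβ hgy]
  have hexp : ‖α • p + (1 - α) • x - y‖ ^ 2
      = ‖x - y‖ ^ 2 + 2 * α * ⟪x - p, y - x⟫ + α ^ 2 * ‖x - p‖ ^ 2 := by
    rw [show α • p + (1 - α) • x - y = (x - y) - α • (x - p) by module, norm_sub_sq_real,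
      real_inner_smul_right, norm_smul, mul_pow, Real.norm_eq_abs, sq_abs, real_inner_comm,
      ← neg_sub y x, inner_neg_right]
    ring
  rw [hexp]
  linarith [mul_le_mul_of_nonneg_left hA hα0, mul_nonneg hα0 (sq_nonneg ‖x - p‖),
    mul_nonneg (mul_nonneg hα0 (sub_nonneg.2 hα1)) (sq_nonneg ‖x - p‖)]

theorem armijo_step_le (hp : ∀ w ∈ C, ⟪x - β • g - p, w - p⟫ ≤ 0) (hx : x ∈ C) (hβ : 0 < β)
    {f : H → ℝ} {δ α : ℝ} (hδ : 0 ≤ δ) (hα0 : 0 ≤ α)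
    (harmijo : f (α • p + (1 - α) • x) ≤ f x - δ * α * ⟪g, x - p⟫) :
    f (α • p + (1 - α) • x) ≤ f x := by
  have := mul_nonneg (mul_nonneg hδ hα0) (inner_sub_nonneg_of_proj hp hx hβ)
  linarith

theorem norm_armijo_step_sub_sq_le (hp : ∀ w ∈ C, ⟪x - β • g - p, w - p⟫ ≤ 0) (hx : x ∈ C)
    (hβ : 0 < β) {b : ℝ} (hβb : β ≤ b) {f : H → ℝ} {δ α : ℝ} (hδ : 0 < δ) (hα0 : 0 ≤ α)
    (hα1 : α ≤ 1) (harmijo : f (α • p + (1 - α) • x) ≤ f x - δ * α * ⟪g, x - p⟫) {y : H}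
    (hy : y ∈ C) (hgy : ⟪g, y - x⟫ ≤ 0) :
    ‖α • p + (1 - α) • x - y‖ ^ 2
      ≤ ‖x - y‖ ^ 2 + 2 * b / δ * (f x - f (α • p + (1 - α) • x)) := by
  have hαV := mul_nonneg hα0 (inner_sub_nonneg_of_proj hp hx hβ)
  calc ‖α • p + (1 - α) • x - y‖ ^ 2 ≤ ‖x - y‖ ^ 2 + 2 * β * (α * ⟪g, x - p⟫) :=
        norm_step_sub_sq_le_of_proj hp hx hy hgy hβ.le hα0 hα1
    _ ≤ ‖x - y‖ ^ 2 + 2 * b / δ * (δ * (α * ⟪g, x - p⟫)) := by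
        rw [← mul_assoc (2 * b / δ), div_mul_cancel₀ _ hδ.ne']
        gcongr
    _ ≤ ‖x - y‖ ^ 2 + 2 * b / δ * (f x - f (α • p + (1 - α) • x)) := by
        have : 0 ≤ b := hβ.le.trans hβb
        gcongr
        linarith

end ProjectedGradientStep

theorem stmt_5_general
    {H : Type*} [NormedAddCommGroup H] [InnerProductSpace ℝ H]
    (C : Set H) (hCcv : Convex ℝ C)
    (f : H → ℝ) (hf : ConvexOn ℝ Set.univ f)
    (gradf : H → H)
    (hgrad : ∀ x d : H,
      Tendsto (fun t : ℝ => (f (x + t • d) - f x) / t) (nhdsWithin 0 (Set.Ioi 0))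
        (nhds ⟪gradf x, d⟫))
    (PC : H → H)
    (hPC : ∀ x : H, PC x ∈ C ∧ ∀ z ∈ C, ⟪x - PC x, z - PC x⟫ ≤ 0)
    (θ δ βlo βhi : ℝ)
    (hθ : θ ∈ Set.Ioo (0:ℝ) 1) (hδ : δ ∈ Set.Ioo (0:ℝ) 1)
    (hβlo : 0 < βlo)
    (β : ℕ → ℝ) (hβk : ∀ k, β k ∈ Set.Icc βlo βhi)
    (x z : ℕ → H) (α : ℕ → ℝ) (j : ℕ → ℕ)
    (hx0 : x 0 ∈ C)
    (hz : ∀ k, z k = x k - β k • gradf (x k))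
    (hjA : ∀ k, f ((θ ^ j k) • PC (z k) + (1 - θ ^ j k) • x k)
        ≤ f (x k) - δ * θ ^ j k * ⟪gradf (x k), x k - PC (z k)⟫)
    (hα : ∀ k, α k = θ ^ j k)
    (hstep : ∀ k, x (k+1) = α k • PC (z k) + (1 - α k) • x k)
    (hS : ∃ xs ∈ C, ∀ y ∈ C, f xs ≤ f y)
    : ∃ ε : ℕ → ℝ, (∀ k, 0 ≤ ε k) ∧ Summable ε ∧
      ∀ xs : H, xs ∈ C → (∀ y ∈ C, f xs ≤ f y) → ∀ k,
        ‖x (k+1) - xs‖ ^ 2 ≤ ‖x k - xs‖ ^ 2 + ε k := by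
  obtain ⟨xs₀, hxs₀C, hxs₀min⟩ := hS
  have hα0 k : 0 ≤ α k := hα k ▸ pow_nonneg hθ.1.le _
  have hα1 k : α k ≤ 1 := hα k ▸ pow_le_one₀ hθ.1.le hθ.2.le
  have hxC := hCcv.mem_of_step_mem hx0 (fun k => (hPC (z k)).1) hα0 hα1 hstep
  have hproj k : ∀ w ∈ C, ⟪x k - β k • gradf (x k) - PC (z k), w - PC (z k)⟫ ≤ 0 := by
    rw [← hz k]; exact (hPC (z k)).2
  have hβpos k : 0 < β k := hβlo.trans_le (hβk k).1
  have harmijo k : f (α k • PC (z k) + (1 - α k) • x k)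
      ≤ f (x k) - δ * α k * ⟪gradf (x k), x k - PC (z k)⟫ := hα k ▸ hjA k
  have hanti : Antitone (f ∘ x) := antitone_nat_of_succ_le fun k =>
    show f (x (k + 1)) ≤ f (x k) from hstep k ▸ armijo_step_le (hproj k) (hxC k) (hβpos k) hδ.1.le (hα0 k) (harmijo k)
  have hc : 0 ≤ 2 * βhi / δ := div_nonneg (by linarith [(hβk 0).1, (hβk 0).2]) hδ.1.le
  refine ⟨fun k => 2 * βhi / δ * (f (x k) - f (x (k + 1))),
    fun k => mul_nonneg hc (sub_nonneg.2 (hanti k.le_succ)),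
    (hanti.summable_sub_succ ⟨f xs₀, by rintro _ ⟨k, rfl⟩; exact hxs₀min _ (hxC k)⟩).mul_left _,
    fun xs hxsC hxsmin k => ?_⟩
  have hgxs : ⟪gradf (x k), xs - x k⟫ ≤ 0 :=
    (hf.inner_le_sub_of_tendsto_slope (hgrad _ _)).trans (by linarith [hxsmin _ (hxC k)])
  beta_reduce
  exact hstep k ▸ norm_armijo_step_sub_sq_le (hproj k) (hxC k) (hβpos k) (hβk k).2 hδ.1
    (hα0 k) (hα1 k) (harmijo k) hxsC hgxs

theorem stmt_5
    {H : Type*} [NormedAddCommGroup H] [InnerProductSpace ℝ H] [CompleteSpace H]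
    (C : Set H) (hCne : C.Nonempty) (hCcl : IsClosed C) (hCcv : Convex ℝ C)
    (f : H → ℝ) (hf : ConvexOn ℝ Set.univ f)
    (gradf : H → H)
    (hgrad : ∀ x d : H,
      Tendsto (fun t : ℝ => (f (x + t • d) - f x) / t) (nhdsWithin 0 (Set.Ioi 0))
        (nhds ⟪gradf x, d⟫))
    (PC : H → H)
    (hPC : ∀ x : H, PC x ∈ C ∧ ∀ z ∈ C, ⟪x - PC x, z - PC x⟫ ≤ 0)
    (θ δ βlo βhi : ℝ)
    (hθ : θ ∈ Set.Ioo (0:ℝ) 1) (hδ : δ ∈ Set.Ioo (0:ℝ) 1)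
    (hβlo : 0 < βlo) (hββ : βlo ≤ βhi)
    (β : ℕ → ℝ) (hβk : ∀ k, β k ∈ Set.Icc βlo βhi)
    (x z : ℕ → H) (α : ℕ → ℝ) (j : ℕ → ℕ)
    (hx0 : x 0 ∈ C)
    (hz : ∀ k, z k = x k - β k • gradf (x k))
    (hjA : ∀ k, f ((θ ^ j k) • PC (z k) + (1 - θ ^ j k) • x k)
        ≤ f (x k) - δ * θ ^ j k * ⟪gradf (x k), x k - PC (z k)⟫)
    (hjmin : ∀ k, ∀ i < j k, ¬ (f ((θ ^ i) • PC (z k) + (1 - θ ^ i) • x k)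
        ≤ f (x k) - δ * θ ^ i * ⟪gradf (x k), x k - PC (z k)⟫))
    (hα : ∀ k, α k = θ ^ j k)
    (hstep : ∀ k, x (k+1) = α k • PC (z k) + (1 - α k) • x k)
    (hS : ∃ xs ∈ C, ∀ y ∈ C, f xs ≤ f y)
    : ∃ ε : ℕ → ℝ, (∀ k, 0 ≤ ε k) ∧ Summable ε ∧
      ∀ xs : H, xs ∈ C → (∀ y ∈ C, f xs ≤ f y) → ∀ k,
        ‖x (k+1) - xs‖ ^ 2 ≤ ‖x k - xs‖ ^ 2 + ε k :=
  stmt_5_general C hCcv f hf gradf hgrad PC hPC θ δ βlo βhi hθ hδ hβlo β hβk x z α j hx0 hz hjA hα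
    hstep hS
end

section
/- Assume S_* ≠ ∅ and that ∇f is uniformly continuous on every bounded subset of H. Then the sequence (x^k)_{k∈ℕ} generated by Algorithm A1 is bounded and every weak cluster point of (x^k)_{k∈ℕ} belongs to S_*. -/
/-!
Write `P k = P_C (z k)` and `γ k = ⟪∇f (x k), x k - P k⟫`. The projection inequality gives
`‖x k - P k‖² ≤ β k * γ k`, so the Armijo rule decreases `f` by at least `δ α k γ k` and
`∑ α k γ k < ∞`. Tested against a minimizer `x*`, the same inequality yields the quasi-Fejér
estimate `‖x (k+1) - x*‖² ≤ ‖x k - x*‖² + 3 β̂ α k γ k`, hence boundedness. On a bounded set `∇f`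
is bounded and uniformly continuous; if `α k < 1`, the step `α k / θ` was rejected, which forces
`(1 - δ) γ k < ⟪∇f (y k) - ∇f (x k), P k - x k⟫` with `‖y k - x k‖ = O(α k)`. So `γ k` is small
whether `α k` is small or not, i.e. `γ k → 0`. A weak cluster point `p` lies in `C` because `C`
is weakly closed, and is optimal because `f (x k) ≤ f y + γ k + O(‖x k - P k‖)` for `y ∈ C`,
while the gradient inequality at `p` makes `f` weakly lower semicontinuous.
-/

open Filter Set Metric Topology
open scoped RealInnerProductSpace

theorem le_add_sum_range_of_le_add {u v : ℕ → ℝ} (h : ∀ k, u (k + 1) ≤ u k + v k) (n : ℕ) :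
    u n ≤ u 0 + ∑ i ∈ Finset.range n, v i := by
  have := Finset.sum_le_sum fun i (_ : i ∈ Finset.range n) => sub_le_iff_le_add'.2 (h i)
  rw [Finset.sum_range_sub] at this
  linarith

theorem sum_range_le_of_le_sub_mul {u a : ℕ → ℝ} {δ m : ℝ} (hδ : 0 < δ)
    (h : ∀ k, u (k + 1) ≤ u k - δ * a k) (hm : ∀ k, m ≤ u k) (n : ℕ) :
    ∑ i ∈ Finset.range n, a i ≤ (u 0 - m) / δ := by
  have := le_add_sum_range_of_le_add (v := fun k => -(δ * a k)) (fun k => h k) n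
  rw [le_div_iff₀ hδ, Finset.sum_mul]
  simp only [Finset.sum_neg_distrib] at this
  linarith [hm n, Finset.sum_congr rfl fun i (_ : i ∈ Finset.range n) => mul_comm δ (a i)]

theorem tendsto_zero_of_mul_tendsto_zero {α γ : ℕ → ℝ} (hγ : ∀ k, 0 ≤ γ k)
    (hαγ : Tendsto (fun k => α k * γ k) atTop (𝓝 0))
    (hsmall : ∀ ε > 0, ∃ η > 0, ∀ k, α k < 1 → α k < η → γ k < ε) :
    Tendsto γ atTop (𝓝 0) := by
  refine tendsto_order.2 ⟨fun a ha => Eventually.of_forall fun k => ha.trans_le (hγ k),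
    fun ε hε => ?_⟩
  obtain ⟨η, hη, hη_small⟩ := hsmall ε hε
  filter_upwards [(tendsto_order.1 hαγ).2 _ (lt_min hε (mul_pos hη hε))] with k hk
  have h1 := hk.trans_le (min_le_left _ _)
  have h2 := hk.trans_le (min_le_right _ _)
  rcases lt_or_ge (α k) 1 with hα1 | hα1
  · rcases lt_or_ge (α k) η with hαη | hαη
    · exact hη_small k hα1 hαη
    · by_contra! h
      nlinarith [mul_le_mul hαη h hε.le (hη.le.trans hαη)]
  · nlinarith [hγ k]

theorem tendsto_zero_of_sq_le {ι : Type*} {l : Filter ι} {a b : ι → ℝ}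
    (hb : Tendsto b l (𝓝 0)) (h : ∀ i, a i ^ 2 ≤ b i) : Tendsto a l (𝓝 0) :=
  squeeze_zero_norm (fun i => Real.abs_le_sqrt (h i)) (by simpa using hb.sqrt)

theorem exists_norm_le_of_sq_norm_sub_le_add {E : Type*} [SeminormedAddCommGroup E]
    {u : ℕ → E} {c : E} {a : ℕ → ℝ} {S : ℝ}
    (hstep : ∀ k, ‖u (k + 1) - c‖ ^ 2 ≤ ‖u k - c‖ ^ 2 + a k)
    (hS : ∀ n, ∑ i ∈ Finset.range n, a i ≤ S) : ∃ M, ∀ k, ‖u k‖ ≤ M := by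
  -- `r ≤ 1 + r ^ 2` spares a square root
  refine ⟨‖c‖ + 1 + (‖u 0 - c‖ ^ 2 + S), fun k => ?_⟩
  have := le_add_sum_range_of_le_add (u := fun k => ‖u k - c‖ ^ 2) hstep k
  nlinarith [hS k, norm_le_norm_add_norm_sub' (u k) c, sq_nonneg (‖u k - c‖ - 1)]

theorem Convex.iterate_mem {E : Type*} [AddCommGroup E] [Module ℝ E] {C : Set E}
    (hC : Convex ℝ C) {x p : ℕ → E} {α : ℕ → ℝ}
    (h0 : x 0 ∈ C) (hp : ∀ k, p k ∈ C) (hα : ∀ k, α k ∈ Icc 0 1)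
    (hstep : ∀ k, x (k + 1) = α k • p k + (1 - α k) • x k) (k : ℕ) : x k ∈ C := by
  induction k with
  | zero => exact h0
  | succ k ih =>
    rw [hstep]
    exact hC (hp k) ih (hα k).1 (sub_nonneg.2 (hα k).2) (add_sub_cancel _ _)

theorem UniformContinuousOn.exists_norm_le_of_closedBall {E F : Type*} [NormedAddCommGroup E]
    [NormedSpace ℝ E] [NormedAddCommGroup F] {g : E → F} {R : ℝ}
    (hg : UniformContinuousOn g (closedBall 0 R)) : ∃ G, ∀ y ∈ closedBall 0 R, ‖g y‖ ≤ G := by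
  obtain ⟨η, hη, hclose⟩ := Metric.uniformContinuousOn_iff.1 hg 1 one_pos
  obtain ⟨n, hn⟩ := exists_nat_gt (R / η)
  have hn0 : (0 : ℝ) < n + 1 := by positivity
  refine ⟨‖g 0‖ + (n + 1), fun y hy => ?_⟩
  have hR : 0 ≤ R := (norm_nonneg y).trans (mem_closedBall_zero_iff.1 hy)
  -- walk from `0` to `y` in `n + 1` steps of length `< η`
  set w : ℕ → E := fun i => ((i : ℝ) / (n + 1)) • y
  have hw_mem : ∀ i ≤ n + 1, w i ∈ closedBall 0 R := fun i hi =>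
    (convex_closedBall 0 R).smul_mem_of_zero_mem (mem_closedBall_self hR) hy
      ⟨by positivity, div_le_one_of_le₀ (by exact_mod_cast hi) hn0.le⟩
  have hw_step : ∀ i, dist (w (i + 1)) (w i) < η := fun i => by
    rw [dist_eq_norm, ← sub_smul, norm_smul, Nat.cast_succ, ← sub_div, add_sub_cancel_left,
      Real.norm_of_nonneg (by positivity), one_div_mul_eq_div, div_lt_iff₀ hn0]
    rw [div_lt_iff₀ hη] at hn
    nlinarith [mem_closedBall_zero_iff.1 hy]
  have hwalk : ∀ i ≤ n + 1, ‖g (w i) - g 0‖ ≤ i := by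
    intro i hi
    induction i with
    | zero => simp [w]
    | succ i ih =>
      have := hclose _ (hw_mem _ hi) _ (hw_mem i (by omega)) (hw_step i)
      rw [dist_eq_norm] at this
      calc ‖g (w (i + 1)) - g 0‖ ≤ ‖g (w (i + 1)) - g (w i)‖ + ‖g (w i) - g 0‖ :=
            norm_sub_le_norm_sub_add_norm_sub _ _ _
        _ ≤ (i + 1 : ℕ) := by push_cast; linarith [ih (by omega)]
  have hwy : w (n + 1) = y := by simp [w, div_self hn0.ne']
  have := hwalk (n + 1) le_rfl
  rw [hwy] at this
  push_cast at this
  linarith [norm_le_norm_add_norm_sub' (g y) (g 0)]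

section InnerProduct

variable {H : Type*} [NormedAddCommGroup H] [InnerProductSpace ℝ H]

def HasGateauxGradient (f : H → ℝ) (g : H → H) : Prop :=
  ∀ x d : H, Tendsto (fun t : ℝ => (f (x + t • d) - f x) / t) (𝓝[>] 0) (𝓝 ⟪g x, d⟫)

namespace HasGateauxGradient

variable {f : H → ℝ} {g : H → H}

theorem add_inner_le (hg : HasGateauxGradient f g) (hf : ConvexOn ℝ univ f) (a b : H) :
    f a + ⟪g a, b - a⟫ ≤ f b := by
  have hslope : ∀ᶠ t in 𝓝[>] (0 : ℝ), (f (a + t • (b - a)) - f a) / t ≤ f b - f a := by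
    filter_upwards [Ioo_mem_nhdsGT one_pos] with t ⟨ht0, ht1⟩
    have hconv := hf.2 (mem_univ a) (mem_univ b) (sub_nonneg.2 ht1.le) ht0.le (sub_add_cancel 1 t)
    rw [show (1 - t) • a + t • b = a + t • (b - a) by module, smul_eq_mul, smul_eq_mul] at hconv
    rw [div_le_iff₀ ht0]
    linarith
  linarith [le_of_tendsto (hg a (b - a)) hslope]

theorem lt_inner_sub_of_not_armijo (hg : HasGateauxGradient f g) (hf : ConvexOn ℝ univ f)
    {δ t : ℝ} {x P : H} (ht : 0 < t)
    (hfail : ¬ f (t • P + (1 - t) • x) ≤ f x - δ * t * ⟪g x, x - P⟫) :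
    (1 - δ) * ⟪g x, x - P⟫ < ⟪g (t • P + (1 - t) • x) - g x, P - x⟫ := by
  set y := t • P + (1 - t) • x
  have hsub := hg.add_inner_le hf y x
  rw [show x - y = -t • (P - x) by simp only [y]; module, real_inner_smul_right] at hsub
  have hPx : ⟪g x, P - x⟫ = -⟪g x, x - P⟫ := by rw [← inner_neg_right, neg_sub]
  rw [inner_sub_left, hPx]
  have : t * (-⟪g y, P - x⟫) < t * (δ * ⟪g x, x - P⟫) := by linarith [not_le.1 hfail]
  linarith [lt_of_mul_lt_mul_left this ht.le]

theorem le_of_weak_tendsto (hg : HasGateauxGradient f g) (hf : ConvexOn ℝ univ f)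
    {ι : Type*} {l : Filter ι} [l.NeBot] {u : ι → H} {p : H}
    (hup : ∀ y, Tendsto (fun i => ⟪u i, y⟫) l (𝓝 ⟪p, y⟫))
    {v : ι → ℝ} {L : ℝ} (hv : Tendsto v l (𝓝 L)) (huv : ∀ i, f (u i) ≤ v i) : f p ≤ L := by
  have hlin : Tendsto (fun i => f p + ⟪g p, u i - p⟫) l (𝓝 (f p)) := by
    have := ((hup (g p)).sub_const ⟪p, g p⟫).const_add (f p)
    simpa only [sub_self, add_zero, inner_sub_right, real_inner_comm (g p)] using this
  exact le_of_tendsto_of_tendsto hlin hv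
    (Eventually.of_forall fun i => (hg.add_inner_le hf p (u i)).trans (huv i))

theorem exists_pos_inner_lt_of_not_armijo (hg : HasGateauxGradient f g) (hf : ConvexOn ℝ univ f)
    {M D δ ε : ℝ} (huc : UniformContinuousOn g (closedBall 0 (M + D))) (hD : 0 ≤ D)
    (hδ : δ < 1) (hε : 0 < ε) :
    ∃ η > 0, ∀ (x P : H) (t : ℝ), ‖x‖ ≤ M → ‖x - P‖ ≤ D → t ∈ Ioc 0 1 → t < η →
      ¬ f (t • P + (1 - t) • x) ≤ f x - δ * t * ⟪g x, x - P⟫ → ⟪g x, x - P⟫ < ε := by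
  obtain ⟨η, hη, hclose⟩ :=
    Metric.uniformContinuousOn_iff.1 huc ((1 - δ) * ε / (D + 1))
      (div_pos (mul_pos (sub_pos.2 hδ) hε) (by linarith))
  refine ⟨η / (D + 1), by positivity, fun x P t hx hxP ⟨ht0, ht1⟩ htη hfail => ?_⟩
  have hstep : t • P + (1 - t) • x - x = t • (P - x) := by module
  have hstep_le : ‖t • (P - x)‖ ≤ t * D := by
    rw [norm_smul, Real.norm_of_nonneg ht0.le, norm_sub_rev]
    exact mul_le_mul_of_nonneg_left hxP ht0.le
  have hx_mem : x ∈ closedBall 0 (M + D) := by rw [mem_closedBall_zero_iff]; linarith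
  have hy_mem : t • P + (1 - t) • x ∈ closedBall 0 (M + D) := by
    rw [mem_closedBall_zero_iff, ← sub_add_cancel (t • P + (1 - t) • x) x, hstep]
    nlinarith [norm_add_le (t • (P - x)) x]
  have hdist : dist (t • P + (1 - t) • x) x < η := by
    rw [dist_eq_norm, hstep]
    calc ‖t • (P - x)‖ ≤ t * D := hstep_le
      _ ≤ η / (D + 1) * D := by gcongr
      _ < η := by rw [div_mul_eq_mul_div, div_lt_iff₀ (by positivity)]; nlinarith
  have hgrad_close := hclose _ hy_mem _ hx_mem hdist
  rw [dist_eq_norm] at hgrad_close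
  have key : (1 - δ) * ⟪g x, x - P⟫ < (1 - δ) * ε :=
    calc (1 - δ) * ⟪g x, x - P⟫ < ⟪g (t • P + (1 - t) • x) - g x, P - x⟫ :=
          hg.lt_inner_sub_of_not_armijo hf ht0 hfail
      _ ≤ ‖g (t • P + (1 - t) • x) - g x‖ * ‖P - x‖ := real_inner_le_norm _ _
      _ ≤ (1 - δ) * ε / (D + 1) * D :=
          mul_le_mul hgrad_close.le (norm_sub_rev P x ▸ hxP) (norm_nonneg _) (by positivity)
      _ < (1 - δ) * ε := by
          rw [div_mul_eq_mul_div, div_lt_iff₀ (by positivity)]; nlinarith [sub_pos.2 hδ]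
  exact lt_of_mul_lt_mul_left key (sub_pos.2 hδ).le

end HasGateauxGradient

section ProjectedStep

variable {β : ℝ} {g x P : H}

theorem norm_sub_sq_le_inner_of_proj (hP : ⟪x - β • g - P, x - P⟫ ≤ 0) :
    ‖x - P‖ ^ 2 ≤ β * ⟪g, x - P⟫ := by
  rw [sub_right_comm, inner_sub_left, real_inner_smul_left, real_inner_self_eq_norm_sq] at hP
  linarith

theorem norm_sub_le_mul_norm_of_proj (hβ : 0 ≤ β) (hP : ⟪x - β • g - P, x - P⟫ ≤ 0) :
    ‖x - P‖ ≤ β * ‖g‖ := by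
  have hsq := norm_sub_sq_le_inner_of_proj hP
  have hcs := mul_le_mul_of_nonneg_left (real_inner_le_norm g (x - P)) hβ
  by_contra! h
  have hpos : 0 < ‖x - P‖ := (mul_nonneg hβ (norm_nonneg g)).trans_lt h
  nlinarith [mul_lt_mul_of_pos_right h hpos]

theorem norm_convex_step_sub_sq_le {xs : H} {α : ℝ} (hα : α ∈ Icc 0 1) (hβ : 0 ≤ β)
    (hPx : ⟪x - β • g - P, x - P⟫ ≤ 0) (hPxs : ⟪x - β • g - P, xs - P⟫ ≤ 0)
    (hg : ⟪g, xs - x⟫ ≤ 0) :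
    ‖α • P + (1 - α) • x - xs‖ ^ 2 ≤ ‖x - xs‖ ^ 2 + 3 * α * (β * ⟪g, x - P⟫) := by
  have hgap := norm_sub_sq_le_inner_of_proj hPx
  have hcross : ⟪x - xs, P - x⟫ ≤ β * ⟪g, x - P⟫ := by
    rw [sub_right_comm, inner_sub_left, real_inner_smul_left,
      show xs - P = (xs - x) + (x - P) by abel, inner_add_right, inner_add_right,
      real_inner_self_eq_norm_sq] at hPxs
    have : ⟪x - P, xs - x⟫ = ⟪x - xs, P - x⟫ := by
      rw [← neg_sub x xs, ← neg_sub P x, inner_neg_neg, real_inner_comm]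
    nlinarith
  rw [show α • P + (1 - α) • x - xs = (x - xs) + α • (P - x) by module, norm_add_sq_real,
    real_inner_smul_right, norm_smul, Real.norm_of_nonneg hα.1, mul_pow, norm_sub_rev P x]
  have hβγ : 0 ≤ β * ⟪g, x - P⟫ := (sq_nonneg _).trans hgap
  nlinarith [mul_le_mul_of_nonneg_left hcross hα.1, mul_le_mul_of_nonneg_left hgap (sq_nonneg α),
    mul_le_mul_of_nonneg_right (pow_le_of_le_one hα.1 hα.2 two_ne_zero) hβγ]

end ProjectedStep

theorem HasGateauxGradient.sub_le_inner_add_of_proj {f : H → ℝ} {g : H → H}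
    (hg : HasGateauxGradient f g) (hf : ConvexOn ℝ univ f) {β : ℝ} (hβ : 0 < β) {x P y : H}
    (hPy : ⟪x - β • g x - P, y - P⟫ ≤ 0) :
    f x - f y ≤ ⟪g x, x - P⟫ + ‖x - P‖ * ‖y - P‖ / β := by
  have hsub := hg.add_inner_le hf x y
  rw [show y - x = (y - P) - (x - P) by abel, inner_sub_right] at hsub
  rw [sub_right_comm, inner_sub_left, real_inner_smul_left] at hPy
  have hcs : -⟪g x, y - P⟫ ≤ ‖x - P‖ * ‖y - P‖ / β := by
    rw [le_div_iff₀ hβ]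
    linarith [neg_le_of_abs_le (abs_real_inner_le_norm (x - P) (y - P))]
  linarith

theorem mem_of_weak_tendsto_of_proj {C : Set H} {p q : H} (hq : q ∈ C)
    (hpq : ∀ z ∈ C, ⟪p - q, z - q⟫ ≤ 0) {ι : Type*} {l : Filter ι} [l.NeBot] {u : ι → H}
    (hu : ∀ i, u i ∈ C) (hup : ∀ y, Tendsto (fun i => ⟪u i, y⟫) l (𝓝 ⟪p, y⟫)) : p ∈ C := by
  have hlim : ⟪p - q, p - q⟫ ≤ 0 := by
    have := (hup (p - q)).sub_const ⟪q, p - q⟫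
    simp only [← inner_sub_left] at this
    exact le_of_tendsto' this fun i => real_inner_comm (p - q) (u i - q) ▸ hpq _ (hu i)
  rw [real_inner_self_nonpos, sub_eq_zero] at hlim
  exact hlim ▸ hq

section ArmijoProjectedGradient

variable {f : H → ℝ} {g : H → H} {x P : ℕ → H}

theorem exists_norm_le_of_proj_step (hg : HasGateauxGradient f g) (hf : ConvexOn ℝ univ f)
    {t β : ℕ → ℝ} {C : Set H} {xs : H} {βhi S : ℝ}
    (ht : ∀ k, t k ∈ Icc 0 1) (hβ : ∀ k, β k ∈ Ioc 0 βhi)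
    (hstep : ∀ k, x (k + 1) = t k • P k + (1 - t k) • x k)
    (hP : ∀ k, ∀ y ∈ C, ⟪x k - β k • g (x k) - P k, y - P k⟫ ≤ 0)
    (hx : ∀ k, x k ∈ C) (hxs : xs ∈ C) (hxs_min : ∀ k, f xs ≤ f (x k))
    (hS : ∀ n, ∑ k ∈ Finset.range n, t k * ⟪g (x k), x k - P k⟫ ≤ S) :
    ∃ M, ∀ k, ‖x k‖ ≤ M := by
  refine exists_norm_le_of_sq_norm_sub_le_add (c := xs)
    (a := fun k => 3 * βhi * (t k * ⟪g (x k), x k - P k⟫)) (S := 3 * βhi * S)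
    (fun k => ?_) (fun n => ?_)
  · have hdesc : ⟪g (x k), xs - x k⟫ ≤ 0 := by linarith [hg.add_inner_le hf (x k) xs, hxs_min k]
    have hγ : 0 ≤ ⟪g (x k), x k - P k⟫ := nonneg_of_mul_nonneg_right
      ((sq_nonneg _).trans (norm_sub_sq_le_inner_of_proj (hP k _ (hx k)))) (hβ k).1
    rw [hstep]
    refine (norm_convex_step_sub_sq_le (ht k) (hβ k).1.le (hP k _ (hx k)) (hP k _ hxs)
      hdesc).trans ?_
    nlinarith [mul_le_mul_of_nonneg_right (hβ k).2 (mul_nonneg (ht k).1 hγ)]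
  · rw [← Finset.mul_sum]
    exact mul_le_mul_of_nonneg_left (hS n) (by linarith [(hβ 0).1, (hβ 0).2])

theorem tendsto_inner_zero_of_armijo (hg : HasGateauxGradient f g) (hf : ConvexOn ℝ univ f)
    {θ δ M D : ℝ} {j : ℕ → ℕ} (hθ : θ ∈ Ioo 0 1) (hδ : δ < 1)
    (huc : UniformContinuousOn g (closedBall 0 (M + D)))
    (hx : ∀ k, ‖x k‖ ≤ M) (hxP : ∀ k, ‖x k - P k‖ ≤ D)
    (hγ : ∀ k, 0 ≤ ⟪g (x k), x k - P k⟫)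
    (hjmin : ∀ k, ∀ i < j k, ¬ (f (θ ^ i • P k + (1 - θ ^ i) • x k)
        ≤ f (x k) - δ * θ ^ i * ⟪g (x k), x k - P k⟫))
    (hθγ : Tendsto (fun k => θ ^ j k * ⟪g (x k), x k - P k⟫) atTop (𝓝 0)) :
    Tendsto (fun k => ⟪g (x k), x k - P k⟫) atTop (𝓝 0) := by
  refine tendsto_zero_of_mul_tendsto_zero hγ hθγ fun ε hε => ?_
  obtain ⟨η, hη, hη_small⟩ :=
    hg.exists_pos_inner_lt_of_not_armijo hf huc ((norm_nonneg _).trans (hxP 0)) hδ hε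
  refine ⟨θ * η, mul_pos hθ.1 hη, fun k hθj1 hθjη => ?_⟩
  have hj : j k ≠ 0 := fun h => by simp [h] at hθj1
  have hθj_pred : θ ^ j k = θ * θ ^ (j k - 1) := by
    rw [← pow_succ', Nat.sub_add_cancel (Nat.pos_of_ne_zero hj)]
  exact hη_small _ _ _ (hx k) (hxP k) ⟨pow_pos hθ.1 _, pow_le_one₀ hθ.1.le hθ.2.le⟩
    (lt_of_mul_lt_mul_left (hθj_pred ▸ hθjη) hθ.1.le) (hjmin k _ (by omega))

theorem HasGateauxGradient.le_of_weak_tendsto_of_proj (hg : HasGateauxGradient f g)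
    (hf : ConvexOn ℝ univ f) {β : ℕ → ℝ} {βlo K : ℝ} {y p : H} (hβlo : 0 < βlo)
    (hβ : ∀ k, βlo ≤ β k) (hPy : ∀ k, ⟪x k - β k • g (x k) - P k, y - P k⟫ ≤ 0)
    (hK : ∀ k, ‖y - P k‖ ≤ K) (hγ : Tendsto (fun k => ⟪g (x k), x k - P k⟫) atTop (𝓝 0))
    (hxP : Tendsto (fun k => ‖x k - P k‖) atTop (𝓝 0)) {φ : ℕ → ℕ}
    (hφ : Tendsto φ atTop atTop) (hp : ∀ v, Tendsto (fun n => ⟪x (φ n), v⟫) atTop (𝓝 ⟪p, v⟫)) :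
    f p ≤ f y := by
  refine hg.le_of_weak_tendsto hf hp (v := fun n => f y + ⟪g (x (φ n)), x (φ n) - P (φ n)⟫
    + ‖x (φ n) - P (φ n)‖ * (K / βlo)) ?_ fun n => ?_
  · simpa [Function.comp_def] using ((hγ.const_add (f y)).add (hxP.mul_const _)).comp hφ
  · have := hg.sub_le_inner_add_of_proj hf (hβlo.trans_le (hβ (φ n))) (hPy (φ n))
    rw [mul_div_assoc] at this
    nlinarith [mul_le_mul_of_nonneg_left (div_le_div₀ ((norm_nonneg _).trans (hK 0))
      (hK (φ n)) hβlo (hβ (φ n))) (norm_nonneg (x (φ n) - P (φ n)))]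

end ArmijoProjectedGradient

end InnerProduct

theorem stmt_6_general
    {H : Type*} [NormedAddCommGroup H] [InnerProductSpace ℝ H]
    (C : Set H) (hCcv : Convex ℝ C)
    (f : H → ℝ) (hf : ConvexOn ℝ Set.univ f)
    (gradf : H → H)
    (hgrad : ∀ x d : H,
      Tendsto (fun t : ℝ => (f (x + t • d) - f x) / t) (nhdsWithin 0 (Set.Ioi 0))
        (nhds ⟪gradf x, d⟫))
    (PC : H → H)
    (hPC : ∀ x : H, PC x ∈ C ∧ ∀ z ∈ C, ⟪x - PC x, z - PC x⟫ ≤ 0)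
    (θ δ βlo βhi : ℝ)
    (hθ : θ ∈ Set.Ioo (0:ℝ) 1) (hδ : δ ∈ Set.Ioo (0:ℝ) 1)
    (hβlo : 0 < βlo) (hββ : βlo ≤ βhi)
    (β : ℕ → ℝ) (hβk : ∀ k, β k ∈ Set.Icc βlo βhi)
    (x z : ℕ → H) (α : ℕ → ℝ) (j : ℕ → ℕ)
    (hx0 : x 0 ∈ C)
    (hz : ∀ k, z k = x k - β k • gradf (x k))
    (hjA : ∀ k, f ((θ ^ j k) • PC (z k) + (1 - θ ^ j k) • x k)
        ≤ f (x k) - δ * θ ^ j k * ⟪gradf (x k), x k - PC (z k)⟫)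
    (hjmin : ∀ k, ∀ i < j k, ¬ (f ((θ ^ i) • PC (z k) + (1 - θ ^ i) • x k)
        ≤ f (x k) - δ * θ ^ i * ⟪gradf (x k), x k - PC (z k)⟫))
    (hα : ∀ k, α k = θ ^ j k)
    (hstep : ∀ k, x (k+1) = α k • PC (z k) + (1 - α k) • x k)
    (hS : ∃ xs ∈ C, ∀ y ∈ C, f xs ≤ f y)
    (hUC : ∀ B : Set H, Bornology.IsBounded B → ∀ ε > 0, ∃ η > 0,
      ∀ a ∈ B, ∀ b ∈ B, ‖a - b‖ < η → ‖gradf a - gradf b‖ < ε)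
    : (∃ M : ℝ, ∀ k, ‖x k‖ ≤ M) ∧
      ∀ p : H, (∃ φ : ℕ → ℕ, StrictMono φ ∧
        ∀ y : H, Tendsto (fun k => ⟪x (φ k), y⟫) atTop (nhds ⟪p, y⟫)) →
        p ∈ C ∧ ∀ y ∈ C, f p ≤ f y := by
  replace hgrad : HasGateauxGradient f gradf := hgrad
  obtain ⟨xs, hxsC, hxs_min⟩ := hS
  obtain rfl : α = fun k => θ ^ j k := funext hα
  obtain rfl : z = fun k => x k - β k • gradf (x k) := funext hz
  beta_reduce at hjA hjmin hstep
  set P := fun k => PC (x k - β k • gradf (x k))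
  set γ := fun k => ⟪gradf (x k), x k - P k⟫
  have hθj : ∀ i, θ ^ i ∈ Icc 0 1 := fun i => ⟨pow_nonneg hθ.1.le i, pow_le_one₀ hθ.1.le hθ.2.le⟩
  have hβ : ∀ k, β k ∈ Ioc 0 βhi := fun k => ⟨hβlo.trans_le (hβk k).1, (hβk k).2⟩
  have hxC : ∀ k, x k ∈ C := hCcv.iterate_mem hx0 (fun k => (hPC _).1) (fun k => hθj _) hstep
  have hgap : ∀ k, ‖x k - P k‖ ^ 2 ≤ β k * γ k := fun k =>
    norm_sub_sq_le_inner_of_proj ((hPC _).2 _ (hxC k))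
  have hγ0 : ∀ k, 0 ≤ γ k := fun k =>
    nonneg_of_mul_nonneg_right ((sq_nonneg _).trans (hgap k)) (hβ k).1
  have hsum : ∀ n, ∑ k ∈ Finset.range n, θ ^ j k * γ k ≤ (f (x 0) - f xs) / δ :=
    sum_range_le_of_le_sub_mul hδ.1 (fun k => by rw [hstep]; linarith [hjA k])
      (fun k => hxs_min _ (hxC k))
  obtain ⟨M, hM⟩ := exists_norm_le_of_proj_step hgrad hf (fun k => hθj _) hβ hstep
    (fun k => (hPC _).2) hxC hxsC (fun k => hxs_min _ (hxC k)) hsum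
  have huc : ∀ R, UniformContinuousOn gradf (closedBall 0 R) := fun R =>
    Metric.uniformContinuousOn_iff.2 fun ε hε => by
      simpa only [dist_eq_norm] using hUC _ isBounded_closedBall ε hε
  obtain ⟨G, hG⟩ := (huc M).exists_norm_le_of_closedBall
  have hD : ∀ k, ‖x k - P k‖ ≤ βhi * G := fun k =>
    (norm_sub_le_mul_norm_of_proj (hβ k).1.le ((hPC _).2 _ (hxC k))).trans <|
      mul_le_mul (hβ k).2 (hG _ (mem_closedBall_zero_iff.2 (hM k))) (norm_nonneg _)
        (hβlo.le.trans hββ)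
  have hγlim : Tendsto γ atTop (𝓝 0) := tendsto_inner_zero_of_armijo hgrad hf hθ hδ.2 (huc _)
    hM hD hγ0 hjmin (summable_of_sum_range_le (fun k => mul_nonneg (hθj _).1 (hγ0 k))
      hsum).tendsto_atTop_zero
  have hgap_lim : Tendsto (fun k => ‖x k - P k‖) atTop (𝓝 0) :=
    tendsto_zero_of_sq_le (by simpa using hγlim.const_mul βhi)
      fun k => (hgap k).trans (mul_le_mul_of_nonneg_right (hβ k).2 (hγ0 k))
  refine ⟨⟨M, hM⟩, fun p ⟨φ, hφ, hp⟩ =>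
    ⟨mem_of_weak_tendsto_of_proj (hPC p).1 (hPC p).2 (fun n => hxC (φ n)) hp, fun y hy => ?_⟩⟩
  have hyP : ∀ k, ‖y - P k‖ ≤ ‖y‖ + M + βhi * G := fun k => by
    linarith [norm_sub_le y (P k), norm_le_norm_add_norm_sub (x k) (P k), hM k, hD k]
  exact hgrad.le_of_weak_tendsto_of_proj hf hβlo (fun k => (hβk k).1) (fun k => (hPC _).2 y hy)
    hyP hγlim hgap_lim hφ.tendsto_atTop hp

theorem stmt_6
    {H : Type*} [NormedAddCommGroup H] [InnerProductSpace ℝ H] [CompleteSpace H]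
    (C : Set H) (hCne : C.Nonempty) (hCcl : IsClosed C) (hCcv : Convex ℝ C)
    (f : H → ℝ) (hf : ConvexOn ℝ Set.univ f)
    (gradf : H → H)
    (hgrad : ∀ x d : H,
      Tendsto (fun t : ℝ => (f (x + t • d) - f x) / t) (nhdsWithin 0 (Set.Ioi 0))
        (nhds ⟪gradf x, d⟫))
    (PC : H → H)
    (hPC : ∀ x : H, PC x ∈ C ∧ ∀ z ∈ C, ⟪x - PC x, z - PC x⟫ ≤ 0)
    (θ δ βlo βhi : ℝ)
    (hθ : θ ∈ Set.Ioo (0:ℝ) 1) (hδ : δ ∈ Set.Ioo (0:ℝ) 1)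
    (hβlo : 0 < βlo) (hββ : βlo ≤ βhi)
    (β : ℕ → ℝ) (hβk : ∀ k, β k ∈ Set.Icc βlo βhi)
    (x z : ℕ → H) (α : ℕ → ℝ) (j : ℕ → ℕ)
    (hx0 : x 0 ∈ C)
    (hz : ∀ k, z k = x k - β k • gradf (x k))
    (hjA : ∀ k, f ((θ ^ j k) • PC (z k) + (1 - θ ^ j k) • x k)
        ≤ f (x k) - δ * θ ^ j k * ⟪gradf (x k), x k - PC (z k)⟫)
    (hjmin : ∀ k, ∀ i < j k, ¬ (f ((θ ^ i) • PC (z k) + (1 - θ ^ i) • x k)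
        ≤ f (x k) - δ * θ ^ i * ⟪gradf (x k), x k - PC (z k)⟫))
    (hα : ∀ k, α k = θ ^ j k)
    (hstep : ∀ k, x (k+1) = α k • PC (z k) + (1 - α k) • x k)
    (hS : ∃ xs ∈ C, ∀ y ∈ C, f xs ≤ f y)
    (hUC : ∀ B : Set H, Bornology.IsBounded B → ∀ ε > 0, ∃ η > 0,
      ∀ a ∈ B, ∀ b ∈ B, ‖a - b‖ < η → ‖gradf a - gradf b‖ < ε)
    : (∃ M : ℝ, ∀ k, ‖x k‖ ≤ M) ∧
      ∀ p : H, (∃ φ : ℕ → ℕ, StrictMono φ ∧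
        ∀ y : H, Tendsto (fun k => ⟪x (φ k), y⟫) atTop (nhds ⟪p, y⟫)) →
        p ∈ C ∧ ∀ y ∈ C, f p ≤ f y :=
  stmt_6_general C hCcv f hf gradf hgrad PC hPC θ δ βlo βhi hθ hδ hβlo hββ β hβk x z α j hx0 hz hjA
    hjmin hα hstep hS hUC
end

section
/- (Failure of the Armijo test forces the gradients to be far apart.) Let x ∈ C, β > 0, δ ∈ (0,1), t ∈ (0,1], set w = P_C(x − β∇f(x)) and ŷ = t w + (1 − t) x. If f(ŷ) > f(x) − δ t ⟨∇f(x), x − w⟩, then ‖∇f(ŷ) − ∇f(x)‖ ‖x − w‖ ≥ (1 − δ)⟨∇f(x), x − w⟩ ≥ ((1 − δ)/β) ‖x − w‖²; in particular ‖∇f(ŷ) − ∇f(x)‖ ≥ ((1 − δ)/β) ‖x − w‖. -/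
/-!
Failure of the Armijo test together with the gradient inequality of the convex function `f` at
`ŷ = x - t (x - w)` gives `⟪∇f(ŷ), x - w⟫ < δ ⟪∇f(x), x - w⟫`, so `⟪∇f(x) - ∇f(ŷ), x - w⟫` exceeds
`(1 - δ) ⟪∇f(x), x - w⟫` and Cauchy–Schwarz yields the first bound. Testing the variational
inequality of the projection `w` at `x ∈ C` gives `‖x - w‖² ≤ β ⟪∇f(x), x - w⟫`, the second bound;
the third follows by dividing the chain by `‖x - w‖`.
-/

open Filter
open scoped RealInnerProductSpace Topology

section

variable {H : Type*} [NormedAddCommGroup H] [InnerProductSpace ℝ H]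

lemma ConvexOn.le_sub_of_tendsto_slope_s8 {s : Set H} {f : H → ℝ} (hf : ConvexOn ℝ s f)
    {y z : H} (hy : y ∈ s) (hz : z ∈ s) {a : ℝ}
    (hlim : Tendsto (fun t : ℝ => (f (y + t • (z - y)) - f y) / t) (𝓝[>] 0) (𝓝 a)) :
    a ≤ f z - f y := by
  refine le_of_tendsto hlim ?_
  filter_upwards [Ioc_mem_nhdsGT (zero_lt_one' ℝ)] with t ⟨ht0, ht1⟩
  have hconv := hf.2 hy hz (sub_nonneg.2 ht1) ht0.le (sub_add_cancel 1 t)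
  have hseg : y + t • (z - y) = (1 - t) • y + t • z := by module
  rw [div_le_iff₀ ht0, hseg]
  simp only [smul_eq_mul] at hconv
  linarith

lemma sq_norm_sub_le_mul_inner_of_inner_le_zero {x w g : H} {b : ℝ}
    (h : ⟪x - b • g - w, x - w⟫ ≤ 0) : ‖x - w‖ ^ 2 ≤ b * ⟪g, x - w⟫ := by
  have hsplit : x - b • g - w = (x - w) - b • g := by abel
  rw [hsplit, inner_sub_left, real_inner_smul_left, real_inner_self_eq_norm_sq] at h
  linarith

lemma inner_lt_of_lt_sub_mul {f : H → ℝ} {g x y d : H} {t δ a : ℝ}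
    (hsub : ⟪g, x - y⟫ ≤ f x - f y) (ht : 0 < t) (hxy : x - y = t • d)
    (hfail : f x - δ * t * a < f y) : ⟪g, d⟫ < δ * a := by
  rw [hxy, real_inner_smul_right] at hsub
  have : t * ⟪g, d⟫ < t * (δ * a) := by linarith
  exact lt_of_mul_lt_mul_left this ht.le

lemma mul_le_of_mul_sq_le_mul {a c r : ℝ} (ha : 0 ≤ a) (hr : 0 ≤ r) (h : c * r ^ 2 ≤ a * r) :
    c * r ≤ a := by
  rcases hr.eq_or_lt with rfl | hr
  · simpa using ha
  · exact le_of_mul_le_mul_right (by linarith) hr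

end

theorem stmt_8_general
    {H : Type*} [NormedAddCommGroup H] [InnerProductSpace ℝ H]
    (C : Set H)
    (f : H → ℝ) (hf : ConvexOn ℝ Set.univ f)
    (gradf : H → H)
    (hgrad : ∀ x d : H,
      Tendsto (fun t : ℝ => (f (x + t • d) - f x) / t) (nhdsWithin 0 (Set.Ioi 0))
        (nhds ⟪gradf x, d⟫))
    (PC : H → H)
    (hPC : ∀ x : H, PC x ∈ C ∧ ∀ z ∈ C, ⟪x - PC x, z - PC x⟫ ≤ 0)
    (x₀ : H) (hx₀ : x₀ ∈ C) (b δ t : ℝ) (hb : 0 < b)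
    (hδ : δ ∈ Set.Ioo (0:ℝ) 1) (ht : t ∈ Set.Ioc (0:ℝ) 1)
    (w yhat : H) (hw : w = PC (x₀ - b • gradf x₀)) (hy : yhat = t • w + (1 - t) • x₀)
    (hfail : f yhat > f x₀ - δ * t * ⟪gradf x₀, x₀ - w⟫)
    : ‖gradf yhat - gradf x₀‖ * ‖x₀ - w‖ ≥ (1 - δ) * ⟪gradf x₀, x₀ - w⟫ ∧
      (1 - δ) * ⟪gradf x₀, x₀ - w⟫ ≥ ((1 - δ) / b) * ‖x₀ - w‖ ^ 2 ∧
      ‖gradf yhat - gradf x₀‖ ≥ ((1 - δ) / b) * ‖x₀ - w‖ := by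
  have hproj : ⟪x₀ - b • gradf x₀ - w, x₀ - w⟫ ≤ 0 := hw ▸ (hPC _).2 x₀ hx₀
  have hsq := sq_norm_sub_le_mul_inner_of_inner_le_zero hproj
  have hgrad_ineq := hf.le_sub_of_tendsto_slope_s8 (Set.mem_univ yhat) (Set.mem_univ x₀)
    (hgrad yhat (x₀ - yhat))
  have hdescent := inner_lt_of_lt_sub_mul hgrad_ineq ht.1
    (show x₀ - yhat = t • (x₀ - w) by rw [hy]; module) hfail
  have hcs := real_inner_le_norm (gradf x₀ - gradf yhat) (x₀ - w)
  rw [inner_sub_left, norm_sub_rev] at hcs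
  have hδ' : 0 < 1 - δ := sub_pos.2 hδ.2
  have hfirst : (1 - δ) * ⟪gradf x₀, x₀ - w⟫ ≤ ‖gradf yhat - gradf x₀‖ * ‖x₀ - w‖ := by linarith
  have hsecond : (1 - δ) / b * ‖x₀ - w‖ ^ 2 ≤ (1 - δ) * ⟪gradf x₀, x₀ - w⟫ := by
    rw [div_mul_eq_mul_div, div_le_iff₀ hb]
    nlinarith
  exact ⟨hfirst, hsecond,
    mul_le_of_mul_sq_le_mul (norm_nonneg _) (norm_nonneg _) (hsecond.trans hfirst)⟩

theorem stmt_8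
    {H : Type*} [NormedAddCommGroup H] [InnerProductSpace ℝ H] [CompleteSpace H]
    (C : Set H) (hCne : C.Nonempty) (hCcl : IsClosed C) (hCcv : Convex ℝ C)
    (f : H → ℝ) (hf : ConvexOn ℝ Set.univ f)
    (gradf : H → H)
    (hgrad : ∀ x d : H,
      Tendsto (fun t : ℝ => (f (x + t • d) - f x) / t) (nhdsWithin 0 (Set.Ioi 0))
        (nhds ⟪gradf x, d⟫))
    (PC : H → H)
    (hPC : ∀ x : H, PC x ∈ C ∧ ∀ z ∈ C, ⟪x - PC x, z - PC x⟫ ≤ 0)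
    (x₀ : H) (hx₀ : x₀ ∈ C) (b δ t : ℝ) (hb : 0 < b)
    (hδ : δ ∈ Set.Ioo (0:ℝ) 1) (ht : t ∈ Set.Ioc (0:ℝ) 1)
    (w yhat : H) (hw : w = PC (x₀ - b • gradf x₀)) (hy : yhat = t • w + (1 - t) • x₀)
    (hfail : f yhat > f x₀ - δ * t * ⟪gradf x₀, x₀ - w⟫)
    : ‖gradf yhat - gradf x₀‖ * ‖x₀ - w‖ ≥ (1 - δ) * ⟪gradf x₀, x₀ - w⟫ ∧
      (1 - δ) * ⟪gradf x₀, x₀ - w⟫ ≥ ((1 - δ) / b) * ‖x₀ - w‖ ^ 2 ∧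
      ‖gradf yhat - gradf x₀‖ ≥ ((1 - δ) / b) * ‖x₀ - w‖ :=
  stmt_8_general C f hf gradf hgrad PC hPC x₀ hx₀ b δ t hb hδ ht w yhat hw hy hfail
end

section
/- Assume S_* ≠ ∅. Then along Algorithm A2, for every k, ‖∇f(x^k)‖ · ‖x^k − x^{k+1}‖ ≥ f(x^k) − f^lev_k ≥ δ (α_k/β̂) ‖x^k − P_C(z^k)‖² ≥ 0. -/
/-! The variational inequality of the projection, tested at `x^k ∈ C`, gives
`‖x^k - P_C(z^k)‖² ≤ β_k ⟪∇f(x^k), x^k - P_C(z^k)⟫`, so the Armijo decrease accepted by the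
line search, and hence `f(x^k) - f^lev_k`, dominates `δ (α_k / β̂) ‖x^k - P_C(z^k)‖²`.
The upper bound holds because `x^{k+1}` lies in the half-space `H_k`, by Cauchy–Schwarz. -/

open Filter
open scoped RealInnerProductSpace

section InnerProductSpace

variable {E : Type*} [NormedAddCommGroup E] [InnerProductSpace ℝ E]

theorem sq_norm_sub_le_mul_inner_of_inner_step_nonpos {x g p : E} {β : ℝ}
    (h : ⟪x - β • g - p, x - p⟫ ≤ 0) : ‖x - p‖ ^ 2 ≤ β * ⟪g, x - p⟫ := by
  rw [show x - β • g - p = (x - p) - β • g by abel, inner_sub_left, real_inner_smul_left,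
    real_inner_self_eq_norm_sq] at h
  linarith

theorem sq_norm_sub_div_le_inner_of_inner_step_nonpos {x g p : E} {β B : ℝ}
    (hβ : 0 < β) (hβB : β ≤ B) (h : ⟪x - β • g - p, x - p⟫ ≤ 0) :
    ‖x - p‖ ^ 2 / B ≤ ⟪g, x - p⟫ := by
  have hle := sq_norm_sub_le_mul_inner_of_inner_step_nonpos h
  have hinner : 0 ≤ ⟪g, x - p⟫ := nonneg_of_mul_nonneg_right ((sq_nonneg _).trans hle) hβ
  rw [div_le_iff₀ (hβ.trans_le hβB)]
  calc ‖x - p‖ ^ 2 ≤ β * ⟪g, x - p⟫ := hle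
    _ ≤ B * ⟪g, x - p⟫ := mul_le_mul_of_nonneg_right hβB hinner
    _ = ⟪g, x - p⟫ * B := mul_comm _ _

theorem sub_le_norm_mul_norm_sub_of_inner_add_sub_nonpos {g x y : E} {a b : ℝ}
    (h : ⟪g, y - x⟫ + a - b ≤ 0) : a - b ≤ ‖g‖ * ‖x - y‖ := by
  have hcs := real_inner_le_norm g (x - y)
  rw [← neg_sub y x, inner_neg_right, neg_sub] at hcs
  linarith

end InnerProductSpace

theorem running_min_le {α : Type*} [LinearOrder α] {u v : ℕ → α} (h0 : u 0 = v 0)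
    (hsucc : ∀ k, u (k + 1) = min (u k) (v (k + 1))) (k : ℕ) : u k ≤ v k := by
  cases k with
  | zero => exact h0.le
  | succ k => exact (hsucc k).trans_le (min_le_right _ _)

theorem stmt_10_general
    {H : Type*} [NormedAddCommGroup H] [InnerProductSpace ℝ H]
    (C : Set H)
    (f : H → ℝ)
    (gradf : H → H)
    (PC : H → H)
    (hPC : ∀ x : H, PC x ∈ C ∧ ∀ z ∈ C, ⟪x - PC x, z - PC x⟫ ≤ 0)
    (θ δ βlo βhi : ℝ)
    (hθ : θ ∈ Set.Ioo (0:ℝ) 1) (hδ : δ ∈ Set.Ioo (0:ℝ) 1)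
    (hβlo : 0 < βlo)
    (β : ℕ → ℝ) (hβk : ∀ k, β k ∈ Set.Icc βlo βhi)
    (x z : ℕ → H) (α : ℕ → ℝ) (j : ℕ → ℕ)
    (hx0 : x 0 ∈ C)
    (hz : ∀ k, z k = x k - β k • gradf (x k))
    (hjA : ∀ k, f ((θ ^ j k) • PC (z k) + (1 - θ ^ j k) • x k)
        ≤ f (x k) - δ * θ ^ j k * ⟪gradf (x k), x k - PC (z k)⟫)
    (hα : ∀ k, α k = θ ^ j k)
    (flev : ℕ → ℝ)
    (hflev0 : flev 0 = f ((θ ^ j 0) • PC (z 0) + (1 - θ ^ j 0) • x 0))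
    (hflevS : ∀ k, flev (k+1) =
        min (flev k) (f ((θ ^ j (k+1)) • PC (z (k+1)) + (1 - θ ^ j (k+1)) • x (k+1))))
    (hstep : ∀ k,
      (x (k+1) ∈ C ∧ ⟪x (k+1) - x k, x 0 - x k⟫ ≤ 0 ∧
        ⟪gradf (x k), x (k+1) - x k⟫ + f (x k) - flev k ≤ 0) ∧
      ∀ y : H, y ∈ C → ⟪y - x k, x 0 - x k⟫ ≤ 0 →
        ⟪gradf (x k), y - x k⟫ + f (x k) - flev k ≤ 0 →
        ‖x (k+1) - x 0‖ ≤ ‖y - x 0‖)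
    : ∀ k, ‖gradf (x k)‖ * ‖x k - x (k+1)‖ ≥ f (x k) - flev k ∧
      f (x k) - flev k ≥ δ * (α k / βhi) * ‖x k - PC (z k)‖ ^ 2 ∧
      δ * (α k / βhi) * ‖x k - PC (z k)‖ ^ 2 ≥ 0 := by
  have hxC : ∀ k, x k ∈ C := by
    rintro (_ | k)
    exacts [hx0, (hstep k).1.1]
  intro k
  have hβ : 0 < β k := hβlo.trans_le (hβk k).1
  have hproj := (hPC (z k)).2 (x k) (hxC k)
  nth_rewrite 1 [hz k] at hproj
  have hdesc := sq_norm_sub_div_le_inner_of_inner_step_nonpos hβ (hβk k).2 hproj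
  have hflev : flev k ≤ f (θ ^ j k • PC (z k) + (1 - θ ^ j k) • x k) :=
    running_min_le (v := fun i => f (θ ^ j i • PC (z i) + (1 - θ ^ j i) • x i)) hflev0 hflevS k
  have hlev : δ * α k * ⟪gradf (x k), x k - PC (z k)⟫ ≤ f (x k) - flev k := by
    rw [hα k]
    linarith [hjA k]
  have hcoef : 0 ≤ δ * α k := by
    rw [hα k]
    exact mul_nonneg hδ.1.le (pow_pos hθ.1 _).le
  have hregroup : δ * (α k / βhi) * ‖x k - PC (z k)‖ ^ 2
      = δ * α k * (‖x k - PC (z k)‖ ^ 2 / βhi) := by ring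
  refine ⟨sub_le_norm_mul_norm_sub_of_inner_add_sub_nonpos (hstep k).1.2.2, ?_, ?_⟩
  · rw [hregroup]
    exact (mul_le_mul_of_nonneg_left hdesc hcoef).trans hlev
  · rw [hregroup]
    exact mul_nonneg hcoef (div_nonneg (sq_nonneg _) (hβ.trans_le (hβk k).2).le)

theorem stmt_10
    {H : Type*} [NormedAddCommGroup H] [InnerProductSpace ℝ H] [CompleteSpace H]
    (C : Set H) (hCne : C.Nonempty) (hCcl : IsClosed C) (hCcv : Convex ℝ C)
    (f : H → ℝ) (hf : ConvexOn ℝ Set.univ f)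
    (gradf : H → H)
    (hgrad : ∀ x d : H,
      Tendsto (fun t : ℝ => (f (x + t • d) - f x) / t) (nhdsWithin 0 (Set.Ioi 0))
        (nhds ⟪gradf x, d⟫))
    (PC : H → H)
    (hPC : ∀ x : H, PC x ∈ C ∧ ∀ z ∈ C, ⟪x - PC x, z - PC x⟫ ≤ 0)
    (θ δ βlo βhi : ℝ)
    (hθ : θ ∈ Set.Ioo (0:ℝ) 1) (hδ : δ ∈ Set.Ioo (0:ℝ) 1)
    (hβlo : 0 < βlo) (hββ : βlo ≤ βhi)
    (β : ℕ → ℝ) (hβk : ∀ k, β k ∈ Set.Icc βlo βhi)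
    (x z : ℕ → H) (α : ℕ → ℝ) (j : ℕ → ℕ)
    (hx0 : x 0 ∈ C)
    (hz : ∀ k, z k = x k - β k • gradf (x k))
    (hjA : ∀ k, f ((θ ^ j k) • PC (z k) + (1 - θ ^ j k) • x k)
        ≤ f (x k) - δ * θ ^ j k * ⟪gradf (x k), x k - PC (z k)⟫)
    (hjmin : ∀ k, ∀ i < j k, ¬ (f ((θ ^ i) • PC (z k) + (1 - θ ^ i) • x k)
        ≤ f (x k) - δ * θ ^ i * ⟪gradf (x k), x k - PC (z k)⟫))
    (hα : ∀ k, α k = θ ^ j k)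
    (flev : ℕ → ℝ)
    (hflev0 : flev 0 = f ((θ ^ j 0) • PC (z 0) + (1 - θ ^ j 0) • x 0))
    (hflevS : ∀ k, flev (k+1) =
        min (flev k) (f ((θ ^ j (k+1)) • PC (z (k+1)) + (1 - θ ^ j (k+1)) • x (k+1))))
    (hstep : ∀ k,
      (x (k+1) ∈ C ∧ ⟪x (k+1) - x k, x 0 - x k⟫ ≤ 0 ∧
        ⟪gradf (x k), x (k+1) - x k⟫ + f (x k) - flev k ≤ 0) ∧
      ∀ y : H, y ∈ C → ⟪y - x k, x 0 - x k⟫ ≤ 0 →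
        ⟪gradf (x k), y - x k⟫ + f (x k) - flev k ≤ 0 →
        ‖x (k+1) - x 0‖ ≤ ‖y - x 0‖)
    (hS : ∃ xs ∈ C, ∀ y ∈ C, f xs ≤ f y)
    : ∀ k, ‖gradf (x k)‖ * ‖x k - x (k+1)‖ ≥ f (x k) - flev k ∧
      f (x k) - flev k ≥ δ * (α k / βhi) * ‖x k - PC (z k)‖ ^ 2 ∧
      δ * (α k / βhi) * ‖x k - PC (z k)‖ ^ 2 ≥ 0 :=
  stmt_10_general C f gradf PC hPC θ δ βlo βhi hθ hδ hβlo β hβk x z α j hx0 hz hjA hα flev hflev0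
    hflevS hstep
end
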